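/- arXiv:math/0204043 — 6 statements merged into one kernel-verified Lean document; each statement's English description precedes it below -/
import Mathlib

section
/- The polynomial Φ_a ∈ F_p[λ] satisfies the hypergeometric differential equation λ(1−λ)·Φ_a'' + (C − (A+B+1)λ)·Φ_a' − A·B·Φ_a = 0, where A, B, C ∈ F_p are the residues A = −α·a3 mod p, B = −α·a4* mod p (equivalently B = α(a4−m) mod p), and C = −α(a2+a3) mod p, and where ' denotes the formal derivative of polynomials. -/
open Polynomial

/-- The `a`-Hasse invariant `Φ_a ∈ 𝔽_p[λ]` of a type `a = (a1, a2, a3, a4)` in the mixed case: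
`Φ_a(λ) = (-1)^(α a3) ∑_{i+j = α a3} C(α a2*, i) C(α a4*, j) λ^j` where `α = (p-1)/m` and
`a_i* = m - a_i`. -/
noncomputable def HasseInv (p m a2 a3 a4 : ℕ) : Polynomial (ZMod p) :=
  let α := (p - 1) / m
  C ((-1 : ZMod p) ^ (α * a3)) *
    ∑ j ∈ Finset.range (α * a3 + 1),
      C ((Nat.choose (α * (m - a2)) (α * a3 - j) * Nat.choose (α * (m - a4)) j : ℕ) : ZMod p) *
        X ^ j

/-!
`Φ_a` is, up to sign, `F(λ) = ∑_{j ≤ N} C(P, N-j) C(Q, j) λ^j` with `N = α a3`, `P = α a2*`,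
`Q = α a4*`. The identity `C(n, k+1)(k+1) = C(n, k)(n-k)` gives the two-term recurrence
`c_{n+1}(n+1)(n+P-N+1) = c_n(n-N)(n-Q)` for its coefficients, which is exactly the coefficient form
of the hypergeometric equation with parameters `-N, -Q, P-N+1`. In `𝔽_p` we have `α m = p - 1 = -1`,
so `P - N + 1 = -α(a2+a3)` and these are the parameters `A, B, C` of the statement.
-/

section Hypergeometric

variable {R : Type*} [CommRing R]

noncomputable def hypergeometricOp (a b c : R) (f : R[X]) : R[X] :=
  X * (1 - X) * derivative (derivative f) + (C c - C (a + b + 1) * X) * derivative f -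
    C (a * b) * f

theorem coeff_hypergeometricOp (a b c : R) (f : R[X]) (n : ℕ) :
    (hypergeometricOp a b c f).coeff n =
      f.coeff (n + 1) * ((n + 1) * (n + c)) - f.coeff n * ((n + a) * (n + b)) := by
  have hexpand : hypergeometricOp a b c f =
      X * derivative (derivative f) - X * (X * derivative (derivative f)) + C c * derivative f -
        C (a + b + 1) * (X * derivative f) - C (a * b) * f := by
    rw [hypergeometricOp]; ring
  rw [hexpand]
  rcases n with _ | _ | n
  · simp only [coeff_sub, coeff_add, mul_coeff_zero, coeff_C_zero, coeff_X_zero, coeff_derivative]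
    push_cast; ring
  · simp only [coeff_sub, coeff_add, coeff_C_mul, coeff_X_mul, mul_coeff_zero, coeff_X_zero,
      coeff_derivative]
    push_cast; ring
  · simp only [coeff_sub, coeff_add, coeff_C_mul, coeff_X_mul, coeff_derivative]
    push_cast; ring

theorem hypergeometricOp_eq_zero_iff (a b c : R) (f : R[X]) :
    hypergeometricOp a b c f = 0 ↔
      ∀ n : ℕ, f.coeff (n + 1) * ((n + 1) * (n + c)) = f.coeff n * ((n + a) * (n + b)) := by
  simp only [Polynomial.ext_iff, coeff_hypergeometricOp, coeff_zero, sub_eq_zero]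

theorem hypergeometricOp_C_mul (a b c r : R) (f : R[X]) :
    hypergeometricOp a b c (C r * f) = C r * hypergeometricOp a b c f := by
  simp only [hypergeometricOp, derivative_C_mul]; ring

end Hypergeometric

theorem Nat.cast_choose_succ_right_mul {R : Type*} [CommRing R] (n k : ℕ) :
    (n.choose (k + 1) : R) * (k + 1) = n.choose k * (n - k) := by
  rcases le_or_gt k n with hkn | hnk
  · have h := congrArg (Nat.cast : ℕ → R) (Nat.choose_succ_right_eq n k)
    push_cast [hkn] at h
    exact h
  · simp [Nat.choose_eq_zero_of_lt hnk, Nat.choose_eq_zero_of_lt (Nat.lt_succ_of_lt hnk)]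

section BinomConv

variable {R : Type*} [CommRing R]

noncomputable def binomConvPoly (N P Q : ℕ) : R[X] :=
  ∑ j ∈ Finset.range (N + 1), C ((P.choose (N - j) * Q.choose j : ℕ) : R) * X ^ j

theorem coeff_binomConvPoly (N P Q n : ℕ) :
    (binomConvPoly N P Q : R[X]).coeff n =
      if n ≤ N then ((P.choose (N - n) * Q.choose n : ℕ) : R) else 0 := by
  simp only [binomConvPoly, finsetSum_coeff, coeff_C_mul, coeff_X_pow, mul_ite, mul_one,
    mul_zero, Finset.sum_ite_eq, Finset.mem_range, Nat.lt_succ_iff]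

theorem hypergeometricOp_binomConvPoly (N P Q : ℕ) :
    hypergeometricOp (-(N : R)) (-(Q : R)) ((P : R) - N + 1) (binomConvPoly N P Q) = 0 := by
  rw [hypergeometricOp_eq_zero_iff]
  intro n
  simp only [coeff_binomConvPoly]
  rcases lt_trichotomy n N with hlt | rfl | hgt
  · obtain ⟨i, rfl⟩ : ∃ i, N = n + 1 + i := ⟨N - (n + 1), by omega⟩
    rw [if_pos (by omega), if_pos (by omega), show n + 1 + i - (n + 1) = i by omega,
      show n + 1 + i - n = i + 1 by omega]
    have hP := Nat.cast_choose_succ_right_mul (R := R) P i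
    have hQ := Nat.cast_choose_succ_right_mul (R := R) Q n
    push_cast
    linear_combination (-(Q.choose (n + 1) : R) * (n + 1)) * hP +
      ((P.choose (i + 1) : R) * (i + 1)) * hQ
  · simp
  · rw [if_neg (by omega), if_neg (by omega)]
    ring

end BinomConv

theorem stmt5_general (p m a2 a3 a4 : ℕ) (hp : p.Prime)
    (hmd : m ∣ p - 1)
    (h2 : 0 < a2 ∧ a2 < m)
    (A B Cc : ZMod p)
    (hA : A = -(((p - 1) / m * a3 : ℕ) : ZMod p))
    (hB : B = -(((p - 1) / m * (m - a4) : ℕ) : ZMod p))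
    (hC : Cc = -(((p - 1) / m * (a2 + a3) : ℕ) : ZMod p)) :
    X * (1 - X) * derivative (derivative (HasseInv p m a2 a3 a4)) +
      (Polynomial.C Cc - Polynomial.C (A + B + 1) * X) * derivative (HasseInv p m a2 a3 a4) -
      Polynomial.C (A * B) * HasseInv p m a2 a3 a4 = 0 := by
  set α := (p - 1) / m
  have hαm : ((α * m : ℕ) : ZMod p) = -1 := by
    rw [Nat.div_mul_cancel hmd, Nat.cast_pred hp.pos, ZMod.natCast_self, zero_sub]
  have hP : ((α * (m - a2) : ℕ) : ZMod p) = -1 - ((α * a2 : ℕ) : ZMod p) := by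
    rw [Nat.mul_sub, Nat.cast_sub (Nat.mul_le_mul_left α h2.2.le), hαm]
  have hC' : Cc = ((α * (m - a2) : ℕ) : ZMod p) - ((α * a3 : ℕ) : ZMod p) + 1 := by
    rw [hC, hP]; push_cast; ring
  have hHasse : HasseInv p m a2 a3 a4 =
      C ((-1 : ZMod p) ^ (α * a3)) * binomConvPoly (α * a3) (α * (m - a2)) (α * (m - a4)) := rfl
  change hypergeometricOp A B Cc (HasseInv p m a2 a3 a4) = 0
  rw [hHasse, hypergeometricOp_C_mul, hA, hB, hC', hypergeometricOp_binomConvPoly, mul_zero]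

/-- `Φ_a` satisfies the hypergeometric differential equation
`λ(1-λ)u'' + (C - (A+B+1)λ)u' - ABu = 0` with `A = -α a3`, `B = α(a4 - m)`,
`C = -α(a2+a3)` in `𝔽_p`. -/
theorem stmt5 (p m a1 a2 a3 a4 : ℕ) (hp : p.Prime) [Fact p.Prime] (hp2 : 2 < p)
    (hm1 : 1 < m) (hmd : m ∣ p - 1)
    (h1 : 0 < a1 ∧ a1 < m) (h2 : 0 < a2 ∧ a2 < m) (h3 : 0 < a3 ∧ a3 < m)
    (h4 : 0 < a4 ∧ a4 < m) (hsum : a1 + a2 + a3 + a4 = 2 * m)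
    (A B Cc : ZMod p)
    (hA : A = -(((p - 1) / m * a3 : ℕ) : ZMod p))
    (hB : B = -(((p - 1) / m * (m - a4) : ℕ) : ZMod p))
    (hC : Cc = -(((p - 1) / m * (a2 + a3) : ℕ) : ZMod p)) :
    X * (1 - X) * derivative (derivative (HasseInv p m a2 a3 a4)) +
      (Polynomial.C Cc - Polynomial.C (A + B + 1) * X) * derivative (HasseInv p m a2 a3 a4) -
      Polynomial.C (A * B) * HasseInv p m a2 a3 a4 = 0 :=
  stmt5_general p m a2 a3 a4 hp hmd h2 A B Cc hA hB hC
end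

section
/- Let k be an algebraically closed field of characteristic p and regard Φ_a as a polynomial over k. Every root λ0 ∈ k of Φ_a with λ0 ≠ 0 and λ0 ≠ 1 is a simple root, i.e. the root multiplicity of Φ_a at λ0 equals 1. -/
/-!
Up to sign, `Φ_a` is `Q = ∑_{i+j=N} C(b, i) C(d, j) λ^j` with `b = α a2*`, `d = α a4*`,
`N = α a3`. The ratio of consecutive coefficients of `Q` is that of the hypergeometric series
`₂F₁(-N, -d; b - N + 1; λ)`, so `Q` solves the hypergeometric equation
`λ(1-λ) Q'' + (b - N + 1 + (N + d - 1)λ) Q' = N d Q`, whose leading coefficient vanishes only at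
`0` and `1`. If `λ0 ∉ {0, 1}` were a root of multiplicity `n ≥ 2`, the left side would be
`n(n-1) λ0(1-λ0) u (λ-λ0)^(n-2)` modulo `(λ-λ0)^(n-1)` with `u(λ0) ≠ 0`, while the right side is
divisible by `(λ-λ0)^(n-1)`. Since `n ≤ N < p`, `n(n-1) ≠ 0` in `k`, a contradiction.
-/

open Polynomial

namespace Polynomial

variable {R : Type*} [CommRing R]

theorem derivative_X_sub_C_pow_succ_mul (a : R) (n : ℕ) (f : R[X]) :
    derivative ((X - C a) ^ (n + 1) * f) =
      (X - C a) ^ n * (((n : R[X]) + 1) * f + (X - C a) * derivative f) := by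
  rw [derivative_mul, derivative_X_sub_C_pow, Nat.add_sub_cancel, C_eq_natCast]
  push_cast
  ring

theorem derivative_derivative_X_sub_C_pow_mul (a : R) (m : ℕ) (f : R[X]) :
    derivative (derivative ((X - C a) ^ (m + 2) * f)) =
      (X - C a) ^ m * (((m : R[X]) + 2) * ((m : R[X]) + 1) * f +
        (X - C a) * (2 * ((m : R[X]) + 2) * derivative f +
          (X - C a) * derivative (derivative f))) := by
  rw [derivative_X_sub_C_pow_succ_mul, derivative_X_sub_C_pow_succ_mul]
  simp only [derivative_add, derivative_mul, derivative_X_sub_C, derivative_natCast,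
    derivative_one]
  push_cast
  ring

theorem hypergeometric_ode_of_coeff {w : R[X]} {a b c : R}
    (h : ∀ n : ℕ, ((n : R) + 1) * (n + c) * w.coeff (n + 1) = (n + a) * (n + b) * w.coeff n) :
    X * (1 - X) * derivative (derivative w) + (C c - C (a + b + 1) * X) * derivative w =
      C (a * b) * w := by
  rw [← sub_eq_zero]
  ext n
  rw [show X * (1 - X) * derivative (derivative w) + (C c - C (a + b + 1) * X) * derivative w
      - C (a * b) * w = X * derivative (derivative w) - X * (X * derivative (derivative w))
        + C c * derivative w - C (a + b + 1) * (X * derivative w) - C (a * b) * w by ring]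
  rcases n with _ | _ | n
  · simp only [coeff_sub, coeff_add, coeff_C_mul, coeff_X_mul_zero, coeff_derivative, coeff_zero]
    linear_combination h 0
  · simp only [coeff_sub, coeff_add, coeff_C_mul, coeff_X_mul_zero, coeff_X_mul,
      coeff_derivative, coeff_zero]
    push_cast
    linear_combination h 1
  · simp only [coeff_sub, coeff_add, coeff_C_mul, coeff_X_mul, coeff_derivative, coeff_zero]
    have h' := h (n + 2)
    push_cast at h' ⊢
    linear_combination h'

variable [IsDomain R]

theorem rootMultiplicity_le_natDegree (Q : R[X]) (a : R) : Q.rootMultiplicity a ≤ Q.natDegree := by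
  classical
  exact count_roots Q ▸ (Multiset.count_le_card _ _).trans (card_roots' Q)

theorem rootMultiplicity_le_one_of_ode {P S T Q : R[X]} {a : R} (hQ : Q ≠ 0)
    (hode : P * derivative (derivative Q) + S * derivative Q = T * Q) (hPa : P.eval a ≠ 0)
    (hchar : ∀ n : ℕ, 0 < n → n ≤ Q.natDegree → (n : R) ≠ 0) :
    Q.rootMultiplicity a ≤ 1 := by
  by_contra! hmult
  obtain ⟨m, hm⟩ : ∃ m, Q.rootMultiplicity a = m + 2 := ⟨_, (Nat.sub_add_cancel hmult).symm⟩
  obtain ⟨f, hQf, hf⟩ := exists_eq_pow_rootMultiplicity_mul_and_not_dvd Q hQ a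
  rw [hm] at hQf
  have hdvdQ : (X - C a) ^ (m + 1) ∣ Q := hQf ▸ (pow_dvd_pow _ (m + 1).le_succ).mul_right f
  have hdvdQ' : (X - C a) ^ (m + 1) ∣ derivative Q := by
    simpa using pow_sub_dvd_iterate_derivative_of_pow_dvd 1 (Dvd.intro f hQf.symm)
  have hdvdPQ'' : (X - C a) ^ (m + 1) ∣ P * derivative (derivative Q) := by
    rw [eq_sub_of_add_eq hode]
    exact dvd_sub (hdvdQ.mul_left T) (hdvdQ'.mul_left S)
  rw [hQf, derivative_derivative_X_sub_C_pow_mul, mul_left_comm, pow_succ,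
    mul_dvd_mul_iff_left (pow_ne_zero m (X_sub_C_ne_zero a)), dvd_iff_isRoot] at hdvdPQ''
  have hdeg : m + 2 ≤ Q.natDegree := hm ▸ rootMultiplicity_le_natDegree Q a
  have hm2 : (m : R) + 2 ≠ 0 := by exact_mod_cast hchar (m + 2) (by omega) hdeg
  have hm1 : (m : R) + 1 ≠ 0 := by exact_mod_cast hchar (m + 1) (by omega) (by omega)
  have hfa : f.eval a ≠ 0 := mt dvd_iff_isRoot.mpr hf
  simp [IsRoot, hPa, hm1, hm2, hfa] at hdvdPQ''

end Polynomial

theorem Nat.cast_sub_mul_choose (R : Type*) [CommRing R] (n x : ℕ) :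
    ((n : R) - x) * n.choose x = ((x : R) + 1) * n.choose (x + 1) := by
  rcases le_or_gt x n with h | h
  · have h' : ((n.choose (x + 1) * (x + 1) : ℕ) : R) = ((n.choose x * (n - x) : ℕ) : R) :=
      congrArg _ (Nat.choose_succ_right_eq n x)
    push_cast [Nat.cast_sub h] at h'
    linear_combination -h'
  · rw [Nat.choose_eq_zero_of_lt h, Nat.choose_eq_zero_of_lt (h.trans x.lt_succ_self)]
    simp

theorem Nat.cast_choose_ne_zero_of_lt_char {R : Type*} [AddMonoidWithOne R] {p : ℕ}
    (hp : p.Prime) [CharP R p] {n x : ℕ} (hn : n < p) (hx : x ≤ n) : (n.choose x : R) ≠ 0 := by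
  rw [ne_eq, CharP.cast_eq_zero_iff R p]
  intro hdvd
  have : p ∣ n.factorial :=
    hdvd.trans ⟨_, by rw [← mul_assoc, Nat.choose_mul_factorial_mul_factorial hx]⟩
  exact absurd (hp.dvd_factorial.mp this) (by omega)

/-- The `t^N`-coefficient of `(1 + t)^b (1 + X t)^d`; up to the factor `C(b, N)` it is the
hypergeometric polynomial `₂F₁(-N, -d; b - N + 1; X)`. -/
noncomputable def chooseConvolution (R : Type*) [Semiring R] (b d N : ℕ) : R[X] :=
  ∑ j ∈ Finset.range (N + 1), C ((b.choose (N - j) * d.choose j : ℕ) : R) * X ^ j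

section chooseConvolution

variable {R : Type*}

theorem coeff_chooseConvolution [Semiring R] (b d N n : ℕ) :
    (chooseConvolution R b d N).coeff n =
      if n ≤ N then ((b.choose (N - n) * d.choose n : ℕ) : R) else 0 := by
  simp only [chooseConvolution, finsetSum_coeff, coeff_C_mul, coeff_X_pow, mul_ite, mul_one,
    mul_zero, Finset.sum_ite_eq, Finset.mem_range, Nat.lt_succ_iff]

theorem natDegree_chooseConvolution_le [Semiring R] (b d N : ℕ) :
    (chooseConvolution R b d N).natDegree ≤ N :=
  natDegree_sum_le_of_forall_le _ _ fun j hj ↦ (natDegree_C_mul_le _ _).trans <|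
    (natDegree_X_pow_le j).trans (Nat.lt_succ_iff.mp (Finset.mem_range.mp hj))

theorem coeff_chooseConvolution_succ [CommRing R] (b d N n : ℕ) :
    ((n : R) + 1) * (n + ((b : R) - N + 1)) * (chooseConvolution R b d N).coeff (n + 1) =
      (n + -(N : R)) * (n + -(d : R)) * (chooseConvolution R b d N).coeff n := by
  simp only [coeff_chooseConvolution]
  rcases lt_trichotomy n N with hn | rfl | hn
  · obtain ⟨i, rfl⟩ : ∃ i, N = n + 1 + i := ⟨N - (n + 1), by omega⟩
    rw [if_pos (by omega), if_pos (by omega), show n + 1 + i - (n + 1) = i by omega,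
      show n + 1 + i - n = i + 1 by omega]
    push_cast
    linear_combination ((n : R) + 1) * (d.choose (n + 1) : R) * Nat.cast_sub_mul_choose R b i
      - ((i : R) + 1) * (b.choose (i + 1) : R) * Nat.cast_sub_mul_choose R d n
  · rw [if_neg (by omega)]
    ring
  · rw [if_neg (by omega), if_neg (by omega)]
    ring

variable [CommRing R] [IsDomain R] {p : ℕ} [CharP R p]

theorem chooseConvolution_ne_zero (hp : p.Prime) {b d N : ℕ} (hb : b < p) (hd : d < p)
    (hN : N ≤ b + d) : chooseConvolution R b d N ≠ 0 := by
  intro h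
  have hc := coeff_chooseConvolution (R := R) b d N (min N d)
  rw [h, coeff_zero, if_pos (min_le_left _ _), Nat.cast_mul] at hc
  exact mul_ne_zero (Nat.cast_choose_ne_zero_of_lt_char hp hb (by omega))
    (Nat.cast_choose_ne_zero_of_lt_char hp hd (min_le_right _ _)) hc.symm

theorem rootMultiplicity_chooseConvolution_eq_one (hp : p.Prime) {b d N : ℕ} (hb : b < p)
    (hd : d < p) (hN : N < p) (hNbd : N ≤ b + d) {lam : R} (h0 : lam ≠ 0) (h1 : lam ≠ 1)
    (hroot : (chooseConvolution R b d N).IsRoot lam) :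
    (chooseConvolution R b d N).rootMultiplicity lam = 1 := by
  have hQ := chooseConvolution_ne_zero (R := R) hp hb hd hNbd
  refine le_antisymm (rootMultiplicity_le_one_of_ode hQ
    (hypergeometric_ode_of_coeff (coeff_chooseConvolution_succ b d N)) ?_ fun n hn hnN ↦ ?_)
    ((rootMultiplicity_pos hQ).mpr hroot)
  · simpa using mul_ne_zero h0 (sub_ne_zero.mpr h1.symm)
  · rw [ne_eq, CharP.cast_eq_zero_iff R p]
    intro hdvd
    have := natDegree_chooseConvolution_le (R := R) b d N
    exact absurd (Nat.le_of_dvd hn hdvd) (by omega)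

end chooseConvolution

theorem map_HasseInv {p : ℕ} (k : Type*) [Field k] [CharP k p] (m a2 a3 a4 : ℕ) :
    (HasseInv p m a2 a3 a4).map (ZMod.castHom dvd_rfl k) =
      C ((-1) ^ ((p - 1) / m * a3)) * chooseConvolution k ((p - 1) / m * (m - a2))
        ((p - 1) / m * (m - a4)) ((p - 1) / m * a3) := by
  simp only [HasseInv, chooseConvolution, Polynomial.map_mul, Polynomial.map_sum,
    Polynomial.map_pow, Polynomial.map_X, map_pow, map_neg, map_one, map_natCast,
    Polynomial.map_neg, Polynomial.map_one, Polynomial.map_natCast]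

theorem stmt6_general (p m a1 a2 a3 a4 : ℕ) (hp : p.Prime) (hmd : m ∣ p - 1)
    (h3 : 0 < a3 ∧ a3 < m) (hsum : a1 + a2 + a3 + a4 = 2 * m)
    (k : Type*) [Field k] [CharP k p]
    (lam : k) (hne0 : lam ≠ 0) (hne1 : lam ≠ 1)
    (hroot : ((HasseInv p m a2 a3 a4).map (ZMod.castHom dvd_rfl k)).IsRoot lam) :
    ((HasseInv p m a2 a3 a4).map (ZMod.castHom dvd_rfl k)).rootMultiplicity lam = 1 := by
  set α := (p - 1) / m
  have hαm : α * m < p := Nat.div_mul_cancel hmd ▸ Nat.sub_lt hp.pos one_pos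
  have hb : α * (m - a2) < p := (Nat.mul_le_mul_left α (m.sub_le a2)).trans_lt hαm
  have hd : α * (m - a4) < p := (Nat.mul_le_mul_left α (m.sub_le a4)).trans_lt hαm
  have hN : α * a3 < p := (Nat.mul_le_mul_left α h3.2.le).trans_lt hαm
  have hNbd : α * a3 ≤ α * (m - a2) + α * (m - a4) := by
    rw [← Nat.mul_add]
    exact Nat.mul_le_mul_left α (by omega)
  have hsign : (-1 : k) ^ (α * a3) ≠ 0 := pow_ne_zero _ (neg_ne_zero.mpr one_ne_zero)
  rw [map_HasseInv, IsRoot, eval_mul, eval_C, mul_eq_zero, or_iff_right hsign] at hroot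
  rw [map_HasseInv, rootMultiplicity_mul (mul_ne_zero (C_ne_zero.mpr hsign)
    (chooseConvolution_ne_zero hp hb hd hNbd)), rootMultiplicity_C, zero_add]
  exact rootMultiplicity_chooseConvolution_eq_one hp hb hd hN hNbd hne0 hne1 hroot

/-- over an algebraically closed field `k` of characteristic `p`, every root of
`Φ_a` different from `0` and `1` is simple. -/
theorem stmt6 (p m a1 a2 a3 a4 : ℕ) (hp : p.Prime) [Fact p.Prime] (hp2 : 2 < p)
    (hm1 : 1 < m) (hmd : m ∣ p - 1)
    (h1 : 0 < a1 ∧ a1 < m) (h2 : 0 < a2 ∧ a2 < m) (h3 : 0 < a3 ∧ a3 < m)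
    (h4 : 0 < a4 ∧ a4 < m) (hsum : a1 + a2 + a3 + a4 = 2 * m)
    (k : Type*) [Field k] [IsAlgClosed k] [CharP k p]
    (lam : k) (hne0 : lam ≠ 0) (hne1 : lam ≠ 1)
    (hroot : ((HasseInv p m a2 a3 a4).map (ZMod.castHom dvd_rfl k)).IsRoot lam) :
    ((HasseInv p m a2 a3 a4).map (ZMod.castHom dvd_rfl k)).rootMultiplicity lam = 1 :=
  stmt6_general p m a1 a2 a3 a4 hp hmd h3 hsum k lam hne0 hne1 hroot
end

section
/- The polynomial Φ_a ∈ F_p[λ] is nonzero; its root multiplicity at λ = 0 equals max(α(a2+a3−m), 0), and its root multiplicity at λ = 1 equals max(α(a1+a3−m), 0). -/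
open Polynomial

/-!
Up to the unit `(-1)^K`, `Φ_a = ∑_{j ≤ K} C(A, K - j) C(B, j) λ^j` with `A = α a2*`, `B = α a4*`,
`K = α a3`, all `< p`. At `λ = 0` the coefficients below `j = K - A` vanish because
`C(A, K - j) = 0`, while the one at `K - A` is a product of binomials with top `< p`, a unit
mod `p`. At `λ = 1`, Vandermonde's identity gives the Taylor coefficients
`C(B, i) C(A + B - i, K - i)`. Since `K - i` and `A + B - K = α a1` are `< p`, the prime `p`
divides `C(A + B - i, K - i)` exactly when `A + B - i ≥ p`, i.e. for `i < A + B + 1 - p`.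
-/

open Finset

lemma Nat.sum_choose_sub_mul_choose_mul_choose {A B K i : ℕ} (hi : i ≤ K) :
    ∑ j ∈ range (K + 1), A.choose (K - j) * B.choose j * j.choose i =
      B.choose i * (A + B - i).choose (K - i) := by
  rw [← sum_range_add_sum_Ico _ (by omega : i ≤ K + 1),
    sum_eq_zero fun j hj => by rw [Nat.choose_eq_zero_of_lt (mem_range.mp hj), mul_zero],
    zero_add, sum_Ico_eq_sum_range]
  have hterm : ∀ t, A.choose (K - (i + t)) * B.choose (i + t) * (i + t).choose i =
      B.choose i * ((B - i).choose t * A.choose (K - i - t)) := fun t => by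
    rw [mul_assoc, Nat.choose_mul (Nat.le_add_right i t), Nat.add_sub_cancel_left,
      Nat.sub_add_eq]
    ring
  simp_rw [hterm, ← mul_sum]
  rcases lt_or_ge B i with hBi | hiB
  · simp [Nat.choose_eq_zero_of_lt hBi]
  rw [show A + B - i = (B - i) + A by omega, Nat.add_choose_eq,
    Nat.sum_antidiagonal_eq_sum_range_succ_mk, show K + 1 - i = K - i + 1 by omega]

noncomputable def hassePoly {R : Type*} [Semiring R] (A B K : ℕ) : R[X] :=
  ∑ j ∈ range (K + 1), C ((A.choose (K - j) * B.choose j : ℕ) : R) * X ^ j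

lemma HasseInv_eq_C_mul_hassePoly (p m a2 a3 a4 : ℕ) :
    HasseInv p m a2 a3 a4 = C ((-1 : ZMod p) ^ ((p - 1) / m * a3)) *
      hassePoly ((p - 1) / m * (m - a2)) ((p - 1) / m * (m - a4)) ((p - 1) / m * a3) :=
  rfl

section Coefficients

variable {R : Type*} (A B K : ℕ)

lemma coeff_hassePoly [Semiring R] (n : ℕ) : (hassePoly A B K : R[X]).coeff n =
    if n ≤ K then ((A.choose (K - n) * B.choose n : ℕ) : R) else 0 := by
  simp only [hassePoly, finsetSum_coeff, coeff_C_mul, coeff_X_pow, mul_ite, mul_one, mul_zero,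
    sum_ite_eq, mem_range, Nat.lt_succ_iff]

lemma coeff_hassePoly_comp_X_add_one [CommSemiring R] {i : ℕ} (hi : i ≤ K) :
    ((hassePoly A B K : R[X]).comp (X + C 1)).coeff i =
      ((B.choose i * (A + B - i).choose (K - i) : ℕ) : R) := by
  rw [← Nat.sum_choose_sub_mul_choose_mul_choose hi, hassePoly, Polynomial.sum_comp,
    finsetSum_coeff]
  push_cast
  refine sum_congr rfl fun j _ => ?_
  rw [mul_comp, C_comp, X_pow_comp, C_1, coeff_C_mul, coeff_X_add_one_pow]

end Coefficients

lemma Polynomial.natTrailingDegree_eq_of_coeff_ne_zero {R : Type*} [Semiring R] {f : R[X]}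
    {n : ℕ} (hn : f.coeff n ≠ 0) (hlt : ∀ i < n, f.coeff i = 0) : f.natTrailingDegree = n :=
  le_antisymm (natTrailingDegree_le_of_ne_zero hn)
    (le_natTrailingDegree (fun hf => hn (by rw [hf, coeff_zero])) hlt)

lemma Polynomial.rootMultiplicity_C_mul {R : Type*} [CommRing R] [IsDomain R] {u : R}
    (hu : u ≠ 0) (f : R[X]) (t : R) : (C u * f).rootMultiplicity t = f.rootMultiplicity t := by
  rcases eq_or_ne f 0 with rfl | hf
  · rw [mul_zero]
  rw [rootMultiplicity_mul (mul_ne_zero (C_ne_zero.mpr hu) hf), rootMultiplicity_C, zero_add]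

section ZModPrime

variable {p : ℕ} [Fact p.Prime] {A B K : ℕ}

lemma ZMod.natCast_choose_ne_zero {n k : ℕ} (hn : n < p) (hk : k ≤ n) :
    (n.choose k : ZMod p) ≠ 0 := by
  rw [Ne, ZMod.natCast_eq_zero_iff]
  exact (Nat.Prime.coprime_iff_not_dvd Fact.out).mp
    (Nat.Prime.coprime_choose_of_lt Fact.out hn hk)

lemma coeff_hassePoly_sub_ne_zero (hA : A < p) (hB : B < p) (hK : K ≤ A + B) :
    (hassePoly A B K : (ZMod p)[X]).coeff (K - A) ≠ 0 := by
  rw [coeff_hassePoly, if_pos (Nat.sub_le K A), Nat.cast_mul]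
  exact mul_ne_zero (ZMod.natCast_choose_ne_zero hA (by omega))
    (ZMod.natCast_choose_ne_zero hB (by omega))

lemma hassePoly_ne_zero (hA : A < p) (hB : B < p) (hK : K ≤ A + B) :
    (hassePoly A B K : (ZMod p)[X]) ≠ 0 := fun h =>
  coeff_hassePoly_sub_ne_zero hA hB hK (by rw [h, coeff_zero])

lemma rootMultiplicity_zero_hassePoly (hA : A < p) (hB : B < p) (hK : K ≤ A + B) :
    (hassePoly A B K : (ZMod p)[X]).rootMultiplicity 0 = K - A := by
  rw [rootMultiplicity_eq_natTrailingDegree']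
  refine natTrailingDegree_eq_of_coeff_ne_zero (coeff_hassePoly_sub_ne_zero hA hB hK)
    fun i hi => ?_
  rw [coeff_hassePoly, Nat.choose_eq_zero_of_lt (by omega : A < K - i)]
  simp

lemma rootMultiplicity_one_hassePoly (hA : A < p) (hB : B < p) (hK : K < p) (hKAB : K ≤ A + B)
    (hABK : A + B < K + p) :
    (hassePoly A B K : (ZMod p)[X]).rootMultiplicity 1 = A + B + 1 - p := by
  rw [rootMultiplicity_eq_natTrailingDegree]
  refine natTrailingDegree_eq_of_coeff_ne_zero ?_ fun i hi => ?_
  · rw [coeff_hassePoly_comp_X_add_one A B K (by omega), Nat.cast_mul]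
    exact mul_ne_zero (ZMod.natCast_choose_ne_zero hB (by omega))
      (ZMod.natCast_choose_ne_zero (by omega) (by omega))
  · rw [coeff_hassePoly_comp_X_add_one A B K (by omega), ZMod.natCast_eq_zero_iff]
    exact Dvd.dvd.mul_left (Nat.Prime.dvd_choose Fact.out (by omega) (by omega) (by omega)) _

end ZModPrime

lemma Int.natCast_mul_sub (n k l : ℕ) :
    ((n * (k - l) : ℕ) : ℤ) = max ((n : ℤ) * ((k : ℤ) - l)) 0 := by
  rcases le_total l k with h | h
  · rw [max_eq_left (mul_nonneg (by positivity) (by omega))]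
    push_cast [h]; ring
  · rw [max_eq_right (mul_nonpos_of_nonneg_of_nonpos (by positivity) (by omega)),
      Nat.sub_eq_zero_of_le h, mul_zero, Nat.cast_zero]

theorem stmt7_general (p m a1 a2 a3 a4 : ℕ) [Fact p.Prime]
    (hmd : m ∣ p - 1)
    (h1 : 0 < a1 ∧ a1 < m) (h2 : 0 < a2 ∧ a2 < m) (h3 : 0 < a3 ∧ a3 < m)
    (h4 : 0 < a4 ∧ a4 < m) (hsum : a1 + a2 + a3 + a4 = 2 * m) :
    HasseInv p m a2 a3 a4 ≠ 0 ∧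
    ((HasseInv p m a2 a3 a4).rootMultiplicity 0 : ℤ) =
      max ((((p - 1) / m : ℕ) : ℤ) * ((a2 : ℤ) + (a3 : ℤ) - (m : ℤ))) 0 ∧
    ((HasseInv p m a2 a3 a4).rootMultiplicity 1 : ℤ) =
      max ((((p - 1) / m : ℕ) : ℤ) * ((a1 : ℤ) + (a3 : ℤ) - (m : ℤ))) 0 := by
  rw [HasseInv_eq_C_mul_hassePoly]
  set α := (p - 1) / m
  have hαm : α * m = p - 1 := Nat.div_mul_cancel hmd
  have hp0 : 0 < p := (Fact.out : p.Prime).pos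
  have hlt : ∀ b ≤ m, α * b < p := fun b hb => by
    have := Nat.mul_le_mul_left α hb; omega
  have hA := hlt (m - a2) (Nat.sub_le m a2)
  have hB := hlt (m - a4) (Nat.sub_le m a4)
  have hK := hlt a3 h3.2.le
  have hαa1 := hlt a1 h1.2.le
  have hAB : α * (m - a2) + α * (m - a4) = α * a1 + α * a3 := by
    rw [← Nat.mul_add, ← Nat.mul_add]; congr 1; omega
  have hu : (-1 : ZMod p) ^ (α * a3) ≠ 0 := pow_ne_zero _ (neg_ne_zero.mpr one_ne_zero)
  rw [rootMultiplicity_C_mul hu, rootMultiplicity_C_mul hu,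
    rootMultiplicity_zero_hassePoly hA hB (by omega),
    rootMultiplicity_one_hassePoly hA hB hK (by omega) (by omega), hAB,
    show α * a3 - α * (m - a2) = α * (a2 + a3 - m) by rw [← Nat.mul_sub]; congr 1; omega,
    show α * a1 + α * a3 + 1 - p = α * (a1 + a3 - m) by rw [Nat.mul_sub, Nat.mul_add]; omega,
    Int.natCast_mul_sub, Int.natCast_mul_sub]
  push_cast
  exact ⟨mul_ne_zero (C_ne_zero.mpr hu) (hassePoly_ne_zero hA hB (by omega)), rfl, rfl⟩

/-- `Φ_a ≠ 0`; its root multiplicity at `λ = 0` is `max(α(a2+a3-m), 0)` and its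
root multiplicity at `λ = 1` is `max(α(a1+a3-m), 0)`. -/
theorem stmt7 (p m a1 a2 a3 a4 : ℕ) (hp : p.Prime) [Fact p.Prime] (hp2 : 2 < p)
    (hm1 : 1 < m) (hmd : m ∣ p - 1)
    (h1 : 0 < a1 ∧ a1 < m) (h2 : 0 < a2 ∧ a2 < m) (h3 : 0 < a3 ∧ a3 < m)
    (h4 : 0 < a4 ∧ a4 < m) (hsum : a1 + a2 + a3 + a4 = 2 * m) :
    HasseInv p m a2 a3 a4 ≠ 0 ∧
    ((HasseInv p m a2 a3 a4).rootMultiplicity 0 : ℤ) =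
      max ((((p - 1) / m : ℕ) : ℤ) * ((a2 : ℤ) + (a3 : ℤ) - (m : ℤ))) 0 ∧
    ((HasseInv p m a2 a3 a4).rootMultiplicity 1 : ℤ) =
      max ((((p - 1) / m : ℕ) : ℤ) * ((a1 : ℤ) + (a3 : ℤ) - (m : ℤ))) 0 :=
  stmt7_general p m a1 a2 a3 a4 hmd h1 h2 h3 h4 hsum
end

section
/- The degree of the polynomial Φ_a ∈ F_p[λ] equals min(α·a3, α·(m−a4)). -/
open Polynomial

lemma coeff_aux {R : Type*} [Semiring R] (f : ℕ → R) (M k : ℕ) :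
    (∑ j ∈ Finset.range M, C (f j) * X ^ j).coeff k = if k < M then f k else 0 := by
  rw [finset_sum_coeff]
  simp [coeff_C_mul, coeff_X_pow, Finset.sum_ite_eq, Finset.mem_range]

lemma choose_ne_zero_mod (p n k : ℕ) (hp : p.Prime) (hk : k ≤ n) (hn : n < p) :
    ((n.choose k : ℕ) : ZMod p) ≠ 0 := by
  rw [Ne, ZMod.natCast_eq_zero_iff]
  intro h
  have hd : (n.choose k) ∣ n.factorial := by
    exact ⟨k.factorial * (n - k).factorial, by rw [← mul_assoc]; exact
      (Nat.choose_mul_factorial_mul_factorial hk).symm⟩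
  have := (Nat.Prime.dvd_factorial hp).mp (h.trans hd)
  omega

/-- the degree of `Φ_a` is `min(α a3, α(m - a4))`. -/
theorem stmt8 (p m a1 a2 a3 a4 : ℕ) (hp : p.Prime) [Fact p.Prime] (hp2 : 2 < p)
    (hm1 : 1 < m) (hmd : m ∣ p - 1)
    (h1 : 0 < a1 ∧ a1 < m) (h2 : 0 < a2 ∧ a2 < m) (h3 : 0 < a3 ∧ a3 < m)
    (h4 : 0 < a4 ∧ a4 < m) (hsum : a1 + a2 + a3 + a4 = 2 * m) :
    (HasseInv p m a2 a3 a4).natDegree = min ((p - 1) / m * a3) ((p - 1) / m * (m - a4)) := by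
  set α := (p - 1) / m with hα
  set N := α * a3 with hN
  set A2 := α * (m - a2) with hA2
  set A4 := α * (m - a4) with hA4
  have hαm : α * m = p - 1 := Nat.div_mul_cancel hmd
  have hA4p : A4 < p := by
    have : A4 ≤ α * m := Nat.mul_le_mul_left α (Nat.sub_le m a4)
    omega
  have hA2p : A2 < p := by
    have : A2 ≤ α * m := Nat.mul_le_mul_left α (Nat.sub_le m a2)
    omega
  have hne : ((-1 : ZMod p) ^ N) ≠ 0 := by
    apply pow_ne_zero
    simp only [neg_ne_zero]
    exact one_ne_zero
  have hcoeff : ∀ k, (HasseInv p m a2 a3 a4).coeff k =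
      ((-1 : ZMod p) ^ N) * (if k < N + 1 then ((A2.choose (N - k) * A4.choose k : ℕ) : ZMod p)
        else 0) := by
    intro k
    rw [HasseInv]
    simp only [← hα, ← hN, ← hA2, ← hA4, coeff_C_mul]
    rw [coeff_aux]
  -- the target degree
  have hmain : (HasseInv p m a2 a3 a4).natDegree = min N A4 := by
    apply le_antisymm
    · rw [Polynomial.natDegree_le_iff_coeff_eq_zero]
      intro k hk
      rw [hcoeff k]
      rcases lt_or_ge k (N + 1) with h | h
      · rw [if_pos h]
        have hkA4 : A4 < k := by omega
        rw [Nat.choose_eq_zero_of_lt hkA4]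
        simp
      · rw [if_neg (by omega)]
        simp
    · apply Polynomial.le_natDegree_of_ne_zero
      rw [hcoeff]
      rw [if_pos (by omega)]
      apply mul_ne_zero hne
      rcases le_or_gt N A4 with h | h
      · rw [min_eq_left h]
        rw [Nat.sub_self, Nat.choose_zero_right, one_mul]
        exact choose_ne_zero_mod p A4 N hp h hA4p
      · rw [min_eq_right h.le]
        rw [Nat.choose_self, mul_one]
        apply choose_ne_zero_mod p A2 (N - A4) hp _ hA2p
        rw [tsub_le_iff_right, hN, hA2, hA4, ← Nat.mul_add]
        apply Nat.mul_le_mul_left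
        omega
  rw [hmain]
end

section
/- Let p > 5 be a prime, and let pA and pB denote the two conjugacy classes of elements of order p in SL_2(F_p), where pA is the class of the matrix [[1,1],[0,1]] and pB is the class of [[1,ε],[0,1]] for ε ∈ F_p^× a non-square. Let ξ ∈ F_p^× be a generator and for 0 < i < (p−1)/2 let C(i) = {A ∈ SL_2(F_p) : tr(A) = ξ^i + ξ^{−i}}. For conjugacy classes C1, C2, C3 let Ni(C1,C2,C3) denote the set of triples (g1,g2,g3) with g_j ∈ C_j, g1·g2·g3 = 1 and g1, g2, g3 generating SL_2(F_p), taken modulo simultaneous conjugation by SL_2(F_p). Then for every 0 < i < (p−1)/2, exactly one of the following holds: (i) Ni(pA,pA,C(i)) is empty and Ni(pA,pB,C(i)) has exactly one element, or (ii) Ni(pA,pA,C(i)) has exactly one element and Ni(pA,pB,C(i)) is empty. -/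
/-!
Write `𝐔 b = !![1, b; 0, 1]`, `𝐋 c = !![1, 0; c, 1]` and `τ = ξ^i + ξ^{-i}`; then `c = τ - 2 ≠ 0`
because `ξ^i ≠ 1`. In a triple `(g₁, g₂, g₃)` of the relevant Nielsen class we may conjugate to
`g₁ = 𝐔 1`. Then `tr (𝐔 1 * g₂) = τ` forces the lower-left entry of `g₂` to be `c`, and conjugating
by an element `𝐔 x` of the centralizer of `𝐔 1` turns `g₂` into `𝐋 c`. So each class is either empty
or the class of `(𝐔 1, 𝐋 c, (𝐔 1 * 𝐋 c)⁻¹)`, which generates `SL₂(𝔽_p)`. When `g₂` ranges over the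
class of `𝐔 s` (`s = 1` or `ε`), that triple belongs to it exactly when `𝐋 c` is conjugate to `𝐔 s`,
i.e. when `-s c` is a square. Since `ε` is a non-square, exactly
one of `-c` and `-ε c` is a square.
-/

open Matrix

/-- Triples `(g1, g2, g3)` with `g_j ∈ C_j`, `g1 g2 g3 = 1`, generating the whole group. -/
def NielsenTriple {G : Type*} [Group G] (C1 C2 C3 : Set G) : Type _ :=
  {t : G × G × G // t.1 ∈ C1 ∧ t.2.1 ∈ C2 ∧ t.2.2 ∈ C3 ∧ t.1 * t.2.1 * t.2.2 = 1 ∧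
    Subgroup.closure {t.1, t.2.1, t.2.2} = ⊤}

/-- The Nielsen class: such triples modulo simultaneous conjugation. -/
def Ni {G : Type*} [Group G] (C1 C2 C3 : Set G) : Type _ :=
  Quot (fun t t' : NielsenTriple C1 C2 C3 =>
    ∃ h : G, (t'.val : G × G × G) =
      (h * t.val.1 * h⁻¹, h * t.val.2.1 * h⁻¹, h * t.val.2.2 * h⁻¹))

/-- The subset `C(i)` of `SL₂(𝔽_p)` of matrices of trace `ξ^i + ξ^{-i}`. -/
def TraceClass (p : ℕ) (ξ : (ZMod p)ˣ) (i : ℕ) :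
    Set (Matrix.SpecialLinearGroup (Fin 2) (ZMod p)) :=
  {A | Matrix.trace (A : Matrix (Fin 2) (Fin 2) (ZMod p)) =
    ((ξ ^ i : (ZMod p)ˣ) : ZMod p) + (((ξ ^ i)⁻¹ : (ZMod p)ˣ) : ZMod p)}

open scoped MatrixGroups

lemma Matrix.of_fin_two_eq_iff {α : Type*} {a b c d a' b' c' d' : α} :
    !![a, b; c, d] = !![a', b'; c', d'] ↔ a = a' ∧ b = b' ∧ c = c' ∧ d = d' := by
  simp only [EmbeddingLike.apply_eq_iff_eq, vecCons_inj, and_true, and_assoc]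

section Nielsen
variable {G : Type*} [Group G] {C₁ C₂ C₃ : Set G}

lemma Ni.nonempty_iff : Nonempty (Ni C₁ C₂ C₃) ↔ Nonempty (NielsenTriple C₁ C₂ C₃) :=
  ⟨fun ⟨q⟩ ↦ Quot.inductionOn q fun t ↦ ⟨t⟩, fun ⟨t⟩ ↦ ⟨Quot.mk _ t⟩⟩

lemma Ni.subsingleton_of_forall_conj (g : G × G × G)
    (h : ∀ t : NielsenTriple C₁ C₂ C₃,
      ∃ k : G, t.val = (k * g.1 * k⁻¹, k * g.2.1 * k⁻¹, k * g.2.2 * k⁻¹)) :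
    Subsingleton (Ni C₁ C₂ C₃) := by
  refine ⟨fun x y ↦ ?_⟩
  induction x using Quot.ind with | mk t =>
  induction y using Quot.ind with | mk t' =>
  obtain ⟨k, hk⟩ := h t
  obtain ⟨k', hk'⟩ := h t'
  refine Quot.sound ⟨k' * k⁻¹, ?_⟩
  rw [hk, hk', Prod.mk.injEq, Prod.mk.injEq]
  exact ⟨by group, by group, by group⟩

end Nielsen

lemma add_inv_sub_two_ne_zero {F : Type*} [Field F] {x : F} (hx₀ : x ≠ 0) (hx₁ : x ≠ 1) :
    x + x⁻¹ - 2 ≠ 0 := by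
  intro h
  have hsq : (x - 1) ^ 2 = 0 := by linear_combination x * h - mul_inv_cancel₀ hx₀
  exact hx₁ (sub_eq_zero.mp (pow_eq_zero_iff two_ne_zero |>.mp hsq))

lemma isSquare_mul_iff_not_isSquare {F : Type*} [Field F] [Fintype F] {ε u : F}
    (hε : ¬IsSquare ε) (hu : u ≠ 0) : IsSquare (ε * u) ↔ ¬IsSquare u := by
  classical
  have hε₀ : ε ≠ 0 := by rintro rfl; exact hε IsSquare.zero
  rw [← quadraticChar_one_iff_isSquare (mul_ne_zero hε₀ hu), map_mul,
    quadraticChar_neg_one_iff_not_isSquare.mpr hε, ← quadraticChar_neg_one_iff_not_isSquare]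
  omega

namespace Matrix.SpecialLinearGroup

section
variable {ι R : Type*} [DecidableEq ι] [Fintype ι] [CommRing R]

lemma transvection_pow {i j : ι} (hij : i ≠ j) (b : R) (n : ℕ) :
    transvection hij b ^ n = transvection hij (n * b) := by
  induction n with
  | zero => simp
  | succ n ih => rw [pow_succ, ih, ← transvection_add, Nat.cast_succ, add_one_mul]

lemma trace_eq_of_isConj {A B : SpecialLinearGroup ι R} (h : IsConj A B) :
    trace (A : Matrix ι ι R) = trace (B : Matrix ι ι R) := by
  obtain ⟨k, rfl⟩ := isConj_iff.mp h
  rw [coe_mul, coe_mul, trace_mul_cycle, ← coe_mul, inv_mul_cancel, coe_one, one_mul]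

end

lemma SL2_trace_inv {R : Type*} [CommRing R] (A : SL(2, R)) :
    trace ((A⁻¹ : SL(2, R)) : Matrix (Fin 2) (Fin 2) R) = trace (A : Matrix (Fin 2) (Fin 2) R) := by
  rw [coe_inv, adjugate_fin_two, trace_fin_two, trace_fin_two]
  simp [add_comm]

end Matrix.SpecialLinearGroup

open Matrix.SpecialLinearGroup

local notation "𝐔" => Matrix.SpecialLinearGroup.transvection (zero_ne_one : (0 : Fin 2) ≠ 1)
local notation "𝐋" => Matrix.SpecialLinearGroup.transvection (one_ne_zero : (1 : Fin 2) ≠ 0)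

section Field
variable {F : Type*} [Field F]

lemma coe_upper (b : F) : (𝐔 b : Matrix (Fin 2) (Fin 2) F) = !![1, b; 0, 1] := by
  ext i j; fin_cases i <;> fin_cases j <;> simp [transvection_coe]

lemma coe_lower (c : F) : (𝐋 c : Matrix (Fin 2) (Fin 2) F) = !![1, 0; c, 1] := by
  ext i j; fin_cases i <;> fin_cases j <;> simp [transvection_coe]

lemma trace_upper (b : F) : trace (𝐔 b : Matrix (Fin 2) (Fin 2) F) = 2 := by
  rw [coe_upper, trace_fin_two_of, one_add_one_eq_two]

lemma trace_upper_mul_lower (b c : F) :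
    trace ((𝐔 b * 𝐋 c : SL(2, F)) : Matrix (Fin 2) (Fin 2) F) = 2 + b * c := by
  rw [coe_mul, coe_upper, coe_lower, Matrix.mul_fin_two, trace_fin_two_of]
  ring

lemma upper_mul_upper_mul_inv (x y : F) : 𝐔 x * 𝐔 y * (𝐔 x)⁻¹ = 𝐔 y := by
  rw [transvection_inv, ← transvection_add, ← transvection_add, add_comm x, add_neg_cancel_right]

lemma isConj_upper_lower_iff {s c : F} (hs : s ≠ 0) (hc : c ≠ 0) :
    IsConj (𝐔 s) (𝐋 c) ↔ IsSquare (-(s * c)) := by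
  rw [isConj_iff]
  constructor
  · rintro ⟨k, hk⟩
    rw [mul_inv_eq_iff_eq_mul] at hk
    have hdet := k.prop
    have hm := congrArg (fun A : SL(2, F) ↦ (A : Matrix (Fin 2) (Fin 2) F)) hk
    rw [coe_mul, coe_mul, coe_upper, coe_lower] at hm
    rw [eta_fin_two (k : Matrix (Fin 2) (Fin 2) F)] at hdet hm
    rw [Matrix.mul_fin_two, Matrix.mul_fin_two, of_fin_two_eq_iff] at hm
    rw [det_fin_two_of] at hdet
    obtain ⟨-, h₀₁, -, h₁₁⟩ := hm
    set a := (k : Matrix (Fin 2) (Fin 2) F) 0 0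
    set d := (k : Matrix (Fin 2) (Fin 2) F) 1 0
    set e := (k : Matrix (Fin 2) (Fin 2) F) 1 1
    have ha : a = 0 := (mul_eq_zero.mp (by linear_combination h₀₁ : a * s = 0)).resolve_right hs
    exact ⟨s * d, by linear_combination (s * c) * hdet - (s * d) * h₁₁ - (s * c * e) * ha⟩
  · rintro ⟨r, hr⟩
    have hr₀ : r ≠ 0 := by
      rintro rfl
      exact mul_ne_zero hs hc (neg_eq_zero.mp (hr.trans (zero_mul 0)))
    have hdet : det !![0, -s / r; r / s, 0] = 1 := by
      rw [det_fin_two_of]; field_simp; ring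
    refine ⟨⟨_, hdet⟩, mul_inv_eq_iff_eq_mul.mpr (Subtype.ext ?_)⟩
    change !![0, -s / r; r / s, 0] * (𝐔 s : Matrix (Fin 2) (Fin 2) F) =
      (𝐋 c : Matrix (Fin 2) (Fin 2) F) * !![0, -s / r; r / s, 0]
    rw [coe_upper, coe_lower, Matrix.mul_fin_two, Matrix.mul_fin_two, of_fin_two_eq_iff]
    refine ⟨by ring, by ring, by ring, ?_⟩
    field_simp
    linear_combination -hr

lemma exists_upper_conj_eq_lower {τ : F} (hτ : τ - 2 ≠ 0) {m : SL(2, F)}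
    (hm : trace (m : Matrix (Fin 2) (Fin 2) F) = 2)
    (hUm : trace ((𝐔 1 * m : SL(2, F)) : Matrix (Fin 2) (Fin 2) F) = τ) :
    ∃ x : F, m = 𝐔 x * 𝐋 (τ - 2) * (𝐔 x)⁻¹ := by
  have hdet := m.prop
  have hM := eta_fin_two (m : Matrix (Fin 2) (Fin 2) F)
  rw [coe_mul, coe_upper, hM, Matrix.mul_fin_two, trace_fin_two_of] at hUm
  rw [hM, det_fin_two_of] at hdet
  rw [hM, trace_fin_two_of] at hm
  set a := (m : Matrix (Fin 2) (Fin 2) F) 0 0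
  set d := (m : Matrix (Fin 2) (Fin 2) F) 1 0
  -- `tr (𝐔 1 * m) = tr m + m₁₀`
  have hd : d = τ - 2 := by linear_combination hUm - hm
  have hd₀ : d ≠ 0 := hd ▸ hτ
  refine ⟨(a - 1) / d, Subtype.ext ?_⟩
  rw [coe_mul, coe_mul, transvection_inv, coe_upper, coe_lower, coe_upper, ← hd, hM,
    Matrix.mul_fin_two, Matrix.mul_fin_two, of_fin_two_eq_iff]
  refine ⟨?_, ?_, by ring, ?_⟩ <;> field_simp
  · ring
  · linear_combination a * hm - hdet
  · linear_combination d * hm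

lemma exists_conj_eq_upper_lower_of_trace {τ : F} (hτ : τ - 2 ≠ 0) {g₁ g₂ g₃ : SL(2, F)}
    (h₁ : IsConj (𝐔 1) g₁) (h₂ : trace (g₂ : Matrix (Fin 2) (Fin 2) F) = 2)
    (h₃ : trace (g₃ : Matrix (Fin 2) (Fin 2) F) = τ) (hmul : g₁ * g₂ * g₃ = 1) :
    ∃ k : SL(2, F), g₁ = k * 𝐔 1 * k⁻¹ ∧ g₂ = k * 𝐋 (τ - 2) * k⁻¹ ∧
      g₃ = k * (𝐔 1 * 𝐋 (τ - 2))⁻¹ * k⁻¹ := by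
  obtain ⟨k, rfl⟩ := isConj_iff.mp h₁
  obtain rfl : g₃ = (k * 𝐔 1 * k⁻¹ * g₂)⁻¹ := eq_inv_of_mul_eq_one_right hmul
  have hm : trace ((k⁻¹ * g₂ * k : SL(2, F)) : Matrix (Fin 2) (Fin 2) F) = 2 := by
    rw [← h₂]
    exact trace_eq_of_isConj (isConj_iff.mpr ⟨k, by group⟩)
  have hUm : trace ((𝐔 1 * (k⁻¹ * g₂ * k) : SL(2, F)) : Matrix (Fin 2) (Fin 2) F) = τ := by
    rw [← h₃, SL2_trace_inv]
    exact trace_eq_of_isConj (isConj_iff.mpr ⟨k, by group⟩)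
  obtain ⟨x, hx⟩ := exists_upper_conj_eq_lower hτ hm hUm
  have hg₁ : k * 𝐔 1 * k⁻¹ = (k * 𝐔 x) * 𝐔 1 * (k * 𝐔 x)⁻¹ := by
    conv_lhs => rw [← upper_mul_upper_mul_inv x 1]
    group
  have hg₂ : g₂ = (k * 𝐔 x) * 𝐋 (τ - 2) * (k * 𝐔 x)⁻¹ := by
    calc g₂ = k * (k⁻¹ * g₂ * k) * k⁻¹ := by group
      _ = _ := by rw [hx]; group
  refine ⟨k * 𝐔 x, hg₁, hg₂, ?_⟩
  rw [hg₁, hg₂]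
  group

lemma NielsenTriple.exists_conj_eq_upper_lower {τ : F} (hτ : τ - 2 ≠ 0) {s : F}
    (t : NielsenTriple {A | IsConj (𝐔 1) A} {A | IsConj (𝐔 s) A}
      {A : SL(2, F) | trace (A : Matrix (Fin 2) (Fin 2) F) = τ}) :
    ∃ k : SL(2, F), t.val =
      (k * 𝐔 1 * k⁻¹, k * 𝐋 (τ - 2) * k⁻¹, k * (𝐔 1 * 𝐋 (τ - 2))⁻¹ * k⁻¹) := by
  obtain ⟨h₁, h₂, h₃, hmul, -⟩ := t.prop
  obtain ⟨k, hk₁, hk₂, hk₃⟩ := exists_conj_eq_upper_lower_of_trace hτ h₁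
    ((trace_eq_of_isConj h₂).symm.trans (trace_upper s)) h₃ hmul
  exact ⟨k, by rw [← hk₁, ← hk₂, ← hk₃]⟩

lemma Ni.subsingleton_upper {τ : F} (hτ : τ - 2 ≠ 0) (s : F) :
    Subsingleton (Ni {A | IsConj (𝐔 1) A} {A | IsConj (𝐔 s) A}
      {A : SL(2, F) | trace (A : Matrix (Fin 2) (Fin 2) F) = τ}) :=
  Ni.subsingleton_of_forall_conj (𝐔 1, 𝐋 (τ - 2), (𝐔 1 * 𝐋 (τ - 2))⁻¹)
    (NielsenTriple.exists_conj_eq_upper_lower hτ)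

end Field

section ZMod
variable {p : ℕ} [Fact p.Prime]

lemma closure_upper_lower_eq_top {c : ZMod p} (hc : c ≠ 0) :
    Subgroup.closure {𝐔 1, 𝐋 c} = ⊤ := by
  refine eq_top_iff.mpr fun A _ ↦
    SL2.transvection_induction (· ∈ Subgroup.closure _) (fun i j hij b ↦ ?_) (fun _ _ ↦ mul_mem) A
  fin_cases i <;> fin_cases j
  · exact absurd rfl hij
  · rw [← ZMod.natCast_zmod_val b, ← mul_one (b.val : ZMod p), ← transvection_pow]
    exact pow_mem (Subgroup.subset_closure (by simp)) _
  · rw [← div_mul_cancel₀ b hc, ← ZMod.natCast_zmod_val (b / c), ← transvection_pow]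
    exact pow_mem (Subgroup.subset_closure (by simp)) _
  · exact absurd rfl hij

variable {τ : ZMod p}

lemma Ni.nonempty_upper_iff (hτ : τ - 2 ≠ 0) (s : ZMod p) :
    Nonempty (Ni {A | IsConj (𝐔 1) A} {A | IsConj (𝐔 s) A}
      {A : SL(2, ZMod p) | trace (A : Matrix (Fin 2) (Fin 2) (ZMod p)) = τ}) ↔
      IsConj (𝐔 s) (𝐋 (τ - 2)) := by
  rw [Ni.nonempty_iff]
  constructor
  · rintro ⟨t⟩
    obtain ⟨k, hk⟩ := NielsenTriple.exists_conj_eq_upper_lower hτ t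
    have h₂ : IsConj (𝐔 s) (k * 𝐋 (τ - 2) * k⁻¹) := by
      have := t.prop.2.1
      rwa [hk] at this
    exact h₂.trans (isConj_iff.mpr ⟨k⁻¹, by group⟩)
  · intro h
    refine ⟨⟨(𝐔 1, 𝐋 (τ - 2), (𝐔 1 * 𝐋 (τ - 2))⁻¹), IsConj.refl _, h, ?_, by group, ?_⟩⟩
    · change trace _ = τ
      rw [SL2_trace_inv, trace_upper_mul_lower]
      ring
    · rw [eq_top_iff, ← closure_upper_lower_eq_top hτ]
      exact Subgroup.closure_mono
        (Set.insert_subset_insert (Set.singleton_subset_iff.mpr (Set.mem_insert _ _)))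

lemma Ni.card_upper_eq_one_iff (hτ : τ - 2 ≠ 0) {s : ZMod p} (hs : s ≠ 0) :
    Nat.card (Ni {A | IsConj (𝐔 1) A} {A | IsConj (𝐔 s) A}
      {A : SL(2, ZMod p) | trace (A : Matrix (Fin 2) (Fin 2) (ZMod p)) = τ}) = 1 ↔
      IsSquare (-(s * (τ - 2))) := by
  rw [Nat.card_eq_one_iff_unique, Ni.nonempty_upper_iff hτ, isConj_upper_lower_iff hs hτ]
  exact and_iff_right (Ni.subsingleton_upper hτ s)

lemma Ni.isEmpty_upper_iff (hτ : τ - 2 ≠ 0) {s : ZMod p} (hs : s ≠ 0) :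
    IsEmpty (Ni {A | IsConj (𝐔 1) A} {A | IsConj (𝐔 s) A}
      {A : SL(2, ZMod p) | trace (A : Matrix (Fin 2) (Fin 2) (ZMod p)) = τ}) ↔
      ¬IsSquare (-(s * (τ - 2))) := by
  rw [← not_nonempty_iff, Ni.nonempty_upper_iff hτ, isConj_upper_lower_iff hs hτ]

end ZMod

theorem stmt13_general (p : ℕ) [Fact p.Prime]
    (ξ : (ZMod p)ˣ) (hξ : orderOf ξ = p - 1)
    (ε : ZMod p) (hεns : ¬ ∃ x : ZMod p, x ^ 2 = ε)
    (UA UB : Matrix.SpecialLinearGroup (Fin 2) (ZMod p))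
    (hUA : (UA : Matrix (Fin 2) (Fin 2) (ZMod p)) = !![1, 1; 0, 1])
    (hUB : (UB : Matrix (Fin 2) (Fin 2) (ZMod p)) = !![1, ε; 0, 1])
    (i : ℕ) (hi0 : 0 < i) (hi : i < (p - 1) / 2) :
    Xor'
      (IsEmpty (Ni {A | IsConj UA A} {A | IsConj UA A} (TraceClass p ξ i)) ∧
        Nat.card (Ni {A | IsConj UA A} {A | IsConj UB A} (TraceClass p ξ i)) = 1)
      (Nat.card (Ni {A | IsConj UA A} {A | IsConj UA A} (TraceClass p ξ i)) = 1 ∧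
        IsEmpty (Ni {A | IsConj UA A} {A | IsConj UB A} (TraceClass p ξ i))) := by
  obtain rfl : UA = 𝐔 1 := Subtype.ext (hUA.trans (coe_upper 1).symm)
  obtain rfl : UB = 𝐔 ε := Subtype.ext (hUB.trans (coe_upper ε).symm)
  have hε : ¬IsSquare ε := fun ⟨r, hr⟩ ↦ hεns ⟨r, by rw [hr, sq]⟩
  have hε₀ : ε ≠ 0 := by rintro rfl; exact hε IsSquare.zero
  have hξi : ξ ^ i ≠ 1 := pow_ne_one_of_lt_orderOf hi0.ne' (by omega)
  have hτ : ((ξ ^ i : (ZMod p)ˣ) : ZMod p) + (((ξ ^ i)⁻¹ : (ZMod p)ˣ) : ZMod p) - 2 ≠ 0 := by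
    rw [Units.val_inv_eq_inv_val]
    exact add_inv_sub_two_ne_zero (Units.ne_zero _) (Units.val_eq_one.not.mpr hξi)
  rw [TraceClass, Ni.card_upper_eq_one_iff hτ one_ne_zero, Ni.card_upper_eq_one_iff hτ hε₀,
    Ni.isEmpty_upper_iff hτ one_ne_zero, Ni.isEmpty_upper_iff hτ hε₀, one_mul,
    neg_mul_eq_mul_neg, isSquare_mul_iff_not_isSquare hε (neg_ne_zero.mpr hτ)]
  tauto

/-- rigidity of the triples `(pA, pA, C(i))` and `(pA, pB, C(i))`: for each
`0 < i < (p-1)/2`, exactly one of the two Nielsen classes is empty and the other is a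
singleton. -/
theorem stmt13 (p : ℕ) (hp : p.Prime) [Fact p.Prime] (hp5 : 5 < p)
    (ξ : (ZMod p)ˣ) (hξ : orderOf ξ = p - 1)
    (ε : ZMod p) (hε : ε ≠ 0) (hεns : ¬ ∃ x : ZMod p, x ^ 2 = ε)
    (UA UB : Matrix.SpecialLinearGroup (Fin 2) (ZMod p))
    (hUA : (UA : Matrix (Fin 2) (Fin 2) (ZMod p)) = !![1, 1; 0, 1])
    (hUB : (UB : Matrix (Fin 2) (Fin 2) (ZMod p)) = !![1, ε; 0, 1])
    (i : ℕ) (hi0 : 0 < i) (hi : i < (p - 1) / 2) :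
    Xor'
      (IsEmpty (Ni {A | IsConj UA A} {A | IsConj UA A} (TraceClass p ξ i)) ∧
        Nat.card (Ni {A | IsConj UA A} {A | IsConj UB A} (TraceClass p ξ i)) = 1)
      (Nat.card (Ni {A | IsConj UA A} {A | IsConj UA A} (TraceClass p ξ i)) = 1 ∧
        IsEmpty (Ni {A | IsConj UA A} {A | IsConj UB A} (TraceClass p ξ i))) :=
  stmt13_general p ξ hξ ε hεns UA UB hUA hUB i hi0 hi
end

section
/- Let p > 5 be prime, m > 2 an integer dividing p−1, α = (p−1)/m, and ξ ∈ F_p^× a generator (order p−1). Let a be an integer with 0 < a < m/2 and gcd(a,m) = 1, and set ζ1 = ζ2 = ξ^{α·a} and ζ3 = ζ4 = ξ^{−α·a} (corresponding to the type (a, a, m−a, m−a)). With B1, B2, B3 the matrices defined from ζ1, ζ2, ζ3, ζ4 as in the context: B1 and B2 have determinant 1, trace 2, are different from the identity matrix, and have order exactly p in GL_2(F_p); moreover the matrix ξ^{−α·a}·B3 has determinant 1 and trace ξ^{α·a} + ξ^{−α·a}. -/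
open Matrix

/-- The matrix `B1` from Völklein's braid computation. -/
def MatB1 (p : ℕ) (z2 z3 : ZMod p) : Matrix (Fin 2) (Fin 2) (ZMod p) :=
  !![z2, -1 + z3; z2 * (-1 + z2), 1 - z2 + z2 * z3]

/-- The matrix `B2`. -/
def MatB2 (p : ℕ) (z1 z2 z3 : ZMod p) : Matrix (Fin 2) (Fin 2) (ZMod p) :=
  !![z1 * (1 - z2 + z2 * z3), z2⁻¹ * (-1 + z3) * (-1 + z1 - z1 * z2 + z1 * z2 * z3);
     z1 * z2 * (1 - z2), 1 - z1 + z1 * z2 + z1 * z3 - z1 * z2 * z3]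

/-- The matrix `B3`. -/
def MatB3 (p : ℕ) (z1 z2 z3 : ZMod p) : Matrix (Fin 2) (Fin 2) (ZMod p) :=
  !![1, z1 * (1 - z3); 0, z1 * z2]

lemma order_lem (p : ℕ) [Fact p.Prime] (M : Matrix (Fin 2) (Fin 2) (ZMod p))
    (hN : (M - 1) * (M - 1) = 0) (hM : M ≠ 1) : orderOf M = p := by
  have hp : p.Prime := Fact.out
  have hMp : M ^ p = 1 := by
    have hc : Commute (1 : Matrix (Fin 2) (Fin 2) (ZMod p)) (M - 1) := Commute.one_left _
    have h2 := add_pow_char_of_commute (p := p) hc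
    have hNp : (M - 1) ^ p = 0 := by
      have : (M - 1) ^ p = (M - 1) * (M - 1) * (M - 1) ^ (p - 2) := by
        rw [← sq, ← pow_add]; congr 1; have := hp.two_le; omega
      rw [this, hN, zero_mul]
    have hM1 : M = 1 + (M - 1) := by abel
    rw [hM1, h2, hNp, one_pow, add_zero]
  exact orderOf_eq_prime hMp hM

/-- for the type `(a, a, m-a, m-a)` with `ζ1 = ζ2 = ξ^{αa}`,
`ζ3 = ζ4 = ξ^{-αa}`: the matrices `B1` and `B2` have determinant `1`, trace `2`, are not the
identity, and have order exactly `p`; and `ξ^{-αa}·B3` has determinant `1` and trace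
`ξ^{αa} + ξ^{-αa}`. -/
theorem stmt15 (p m a : ℕ) (hp : p.Prime) [Fact p.Prime] (hp5 : 5 < p)
    (hm2 : 2 < m) (hmd : m ∣ p - 1)
    (ξ : (ZMod p)ˣ) (hξ : orderOf ξ = p - 1)
    (ha0 : 0 < a) (ha : 2 * a < m) (hgcd : Nat.gcd a m = 1)
    (α : ℕ) (hα : α = (p - 1) / m)
    (z1 z2 z3 z4 : (ZMod p)ˣ)
    (hz1 : z1 = ξ ^ (α * a)) (hz2 : z2 = ξ ^ (α * a))
    (hz3 : z3 = (ξ ^ (α * a))⁻¹) (hz4 : z4 = (ξ ^ (α * a))⁻¹) :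
    (MatB1 p (z2 : ZMod p) (z3 : ZMod p)).det = 1 ∧
    Matrix.trace (MatB1 p (z2 : ZMod p) (z3 : ZMod p)) = 2 ∧
    MatB1 p (z2 : ZMod p) (z3 : ZMod p) ≠ 1 ∧
    orderOf (MatB1 p (z2 : ZMod p) (z3 : ZMod p)) = p ∧
    (MatB2 p (z1 : ZMod p) (z2 : ZMod p) (z3 : ZMod p)).det = 1 ∧
    Matrix.trace (MatB2 p (z1 : ZMod p) (z2 : ZMod p) (z3 : ZMod p)) = 2 ∧
    MatB2 p (z1 : ZMod p) (z2 : ZMod p) (z3 : ZMod p) ≠ 1 ∧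
    orderOf (MatB2 p (z1 : ZMod p) (z2 : ZMod p) (z3 : ZMod p)) = p ∧
    ((((ξ ^ (α * a))⁻¹ : (ZMod p)ˣ) : ZMod p) •
        MatB3 p (z1 : ZMod p) (z2 : ZMod p) (z3 : ZMod p)).det = 1 ∧
    Matrix.trace ((((ξ ^ (α * a))⁻¹ : (ZMod p)ˣ) : ZMod p) •
        MatB3 p (z1 : ZMod p) (z2 : ZMod p) (z3 : ZMod p)) =
      ((ξ ^ (α * a) : (ZMod p)ˣ) : ZMod p) + (((ξ ^ (α * a))⁻¹ : (ZMod p)ˣ) : ZMod p) := by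
  subst hz1 hz2 hz3
  set u : ZMod p := ((ξ ^ (α * a) : (ZMod p)ˣ) : ZMod p) with hu
  set v : ZMod p := (((ξ ^ (α * a))⁻¹ : (ZMod p)ˣ) : ZMod p) with hvdef
  have hu0 : u ≠ 0 := Units.ne_zero _
  have huv : u * v = 1 := by rw [hu, hvdef, ← Units.val_mul, mul_inv_cancel, Units.val_one]
  have hv : v = u⁻¹ := (inv_eq_of_mul_eq_one_right huv).symm
  -- u ≠ 1
  have hαm : α * m = p - 1 := by rw [hα]; exact Nat.div_mul_cancel hmd
  have hα0 : 0 < α := by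
    rcases Nat.eq_zero_or_pos α with h | h
    · rw [h, zero_mul] at hαm; omega
    · exact h
  have h2a : 2 * (α * a) < p - 1 := by
    calc 2 * (α * a) = α * (2 * a) := by ring
    _ < α * m := by nlinarith
    _ = p - 1 := hαm
  have hne : (ξ ^ (α * a) : (ZMod p)ˣ) ≠ 1 := by
    intro h
    have hd := orderOf_dvd_of_pow_eq_one h
    rw [hξ] at hd
    have hle := Nat.le_of_dvd (Nat.mul_pos hα0 ha0) hd
    omega
  have hu1 : u ≠ 1 := fun h => hne (Units.val_eq_one.mp h)
  -- B1 facts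
  have hd1 : (MatB1 p u v).det = 1 := by
    simp only [MatB1, det_fin_two_of]; linear_combination huv
  have ht1 : Matrix.trace (MatB1 p u v) = 2 := by
    simp only [MatB1, trace_fin_two_of]; linear_combination huv
  have hB1ne : MatB1 p u v ≠ 1 := by
    intro h
    have h10 : MatB1 p u v 1 0 = (1 : Matrix (Fin 2) (Fin 2) (ZMod p)) 1 0 := by rw [h]
    simp [MatB1, Matrix.one_apply] at h10
    rcases h10 with h' | h'
    · exact hu0 h'
    · exact hu1 (by linear_combination h')
  have hN1 : (MatB1 p u v - 1) * (MatB1 p u v - 1) = 0 := by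
    ext i j
    fin_cases i <;> fin_cases j <;>
      · simp [MatB1, Matrix.mul_apply, Fin.sum_univ_two, Matrix.one_apply, Matrix.sub_apply, hv]
        field_simp
        ring
  -- B2 facts
  have hd2 : (MatB2 p u u v).det = 1 := by
    simp only [MatB2, det_fin_two_of, hv]; field_simp; ring
  have ht2 : Matrix.trace (MatB2 p u u v) = 2 := by
    simp only [MatB2, trace_fin_two_of, hv]; field_simp; ring
  have hB2ne : MatB2 p u u v ≠ 1 := by
    intro h
    have h10 : MatB2 p u u v 1 0 = (1 : Matrix (Fin 2) (Fin 2) (ZMod p)) 1 0 := by rw [h]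
    simp [MatB2, Matrix.one_apply] at h10
    rcases h10 with h' | h'
    · exact hu0 h'
    · exact hu1 (by linear_combination -h')
  have hN2 : (MatB2 p u u v - 1) * (MatB2 p u u v - 1) = 0 := by
    ext i j
    fin_cases i <;> fin_cases j <;>
      · simp [MatB2, Matrix.mul_apply, Fin.sum_univ_two, Matrix.one_apply, Matrix.sub_apply, hv]
        field_simp
        ring
  -- B3 facts
  have hd3 : (v • MatB3 p u u v).det = 1 := by
    rw [Matrix.det_fin_two]
    simp [MatB3, Matrix.smul_apply, hv]
    field_simp
  have ht3 : Matrix.trace (v • MatB3 p u u v) = u + v := by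
    rw [Matrix.trace_fin_two]
    simp [MatB3, Matrix.smul_apply, hv]
    field_simp
    ring
  exact ⟨hd1, ht1, hB1ne, order_lem p _ hN1 hB1ne, hd2, ht2, hB2ne,
    order_lem p _ hN2 hB2ne, hd3, ht3⟩
end
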